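/- arXiv:math/0611267 — 6 statements merged into one kernel-verified Lean document; each statement's English description precedes it below -/
import Mathlib

section
/- Let k ≥ 1 and let (y_1, ..., y_m) be a partition of 2k (with y_1 ≥ ... ≥ y_m ≥ 1) having m ≥ k parts. Then (y_j) fails to refine the partition (k,k) if and only if either (y_j) = (k+1, 1, ..., 1), or k is odd and (y_j) = (2, ..., 2). -/
/-!
If some part exceeds `k`, the remaining `≥ k - 1` parts sum to `≤ k - 1`, so they are all `1` and
the large part is `k + 1`. Otherwise write `y` as its parts `≥ 2` followed by `a` ones. With no
ones, `≥ k` parts `≥ 2` summing to `2k` are exactly `k` twos. With `a ≥ 1` ones, take parts `≥ 2`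
greedily, largest first, while the sum stays `≤ k`; the ones then fill the gap to `k`. Were the gap
larger than `a`, the first rejected part `w` would be `≥ a + 2 ≥ 3`, so the `L` greedy parts would
sum to `≥ 3L`, while counting parts bounds that sum by `2L`: nothing was taken, and `w > k`.
-/

def IsPartition (d : ℕ) (l : List ℕ) : Prop :=
  l.Pairwise (· ≥ ·) ∧ (∀ x ∈ l, 0 < x) ∧ l.sum = d

def RefinesKK (y : List ℕ) (k : ℕ) : Prop :=
  ∃ l₁ l₂ : List ℕ, (l₁ ++ l₂).Perm y ∧ l₁.sum = k ∧ l₂.sum = k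

namespace List

lemma length_mul_le_sum {l : List ℕ} {c : ℕ} (h : ∀ x ∈ l, c ≤ x) : l.length * c ≤ l.sum := by
  simpa using l.card_nsmul_le_sum c h

lemma eq_replicate_of_forall_le_of_sum_le {l : List ℕ} {c : ℕ} (h : ∀ x ∈ l, c ≤ x)
    (hsum : l.sum ≤ l.length * c) : l = replicate l.length c := by
  refine eq_replicate_of_mem fun x hx => (h x hx).antisymm' (not_lt.1 fun hlt => ?_)
  have := sum_lt_sum (fun _ => c) id h ⟨x, hx, hlt⟩
  simp only [map_const', sum_replicate, smul_eq_mul, map_id_fun, id_eq] at this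
  omega

lemma exists_append_sum_le_lt (l : List ℕ) (n : ℕ) :
    ∃ p r, p ++ r = l ∧ p.sum ≤ n ∧ ∀ w r', r = w :: r' → n < p.sum + w := by
  induction l generalizing n with
  | nil => exact ⟨[], [], rfl, by simp, by simp⟩
  | cons x xs ih =>
    by_cases hx : x ≤ n
    · obtain ⟨p, r, rfl, hp, hnext⟩ := ih (n - x)
      refine ⟨x :: p, r, rfl, by simp only [sum_cons]; omega, fun w r' hr => ?_⟩
      have := hnext w r' hr
      simp only [sum_cons]
      omega
    · exact ⟨[], x :: xs, rfl, by simp, fun w r' hr => by cases hr; simpa using hx⟩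

lemma exists_eq_append_replicate_one {l : List ℕ} (hl : l.Pairwise (· ≥ ·))
    (hpos : ∀ x ∈ l, 0 < x) : ∃ z a, l = z ++ replicate a 1 ∧ ∀ x ∈ z, 2 ≤ x := by
  induction l with
  | nil => exact ⟨[], 0, rfl, by simp⟩
  | cons x xs ih =>
    by_cases hx : 2 ≤ x
    · obtain ⟨z, a, rfl, hz⟩ := ih hl.of_cons fun y hy => hpos y (mem_cons_of_mem _ hy)
      exact ⟨x :: z, a, rfl, by simpa [hx] using hz⟩
    · have hone : ∀ y ∈ x :: xs, y = 1 := by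
        intro y hy
        have hyx : y ≤ x := (mem_cons.1 hy).elim Nat.le_of_eq (rel_of_pairwise_cons hl)
        have := hpos y hy
        omega
      exact ⟨[], (x :: xs).length, eq_replicate_of_mem hone, by simp⟩

end List

open List

lemma refinesKK_of_sublist {y l : List ℕ} {k : ℕ} (hl : l <+ y) (hsum : l.sum = k)
    (hy : y.sum = 2 * k) : RefinesKK y k := by
  obtain ⟨l', hperm⟩ := hl.exists_perm_append
  refine ⟨l, l', hperm.symm, hsum, ?_⟩
  have := hperm.sum_eq
  rw [sum_append] at this
  omega

lemma eq_replicate_two_of_forall_two_le {z : List ℕ} {k : ℕ} (htwo : ∀ x ∈ z, 2 ≤ x)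
    (hsum : z.sum = 2 * k) (hlen : k ≤ z.length) : z = replicate k 2 := by
  have := length_mul_le_sum htwo
  rw [eq_replicate_of_forall_le_of_sum_le htwo (by omega), show z.length = k by omega]

lemma refinesKK_replicate_two {k : ℕ} (hk : Even k) : RefinesKK (replicate k 2) k := by
  obtain ⟨j, rfl⟩ := hk
  refine refinesKK_of_sublist (l := replicate j 2) ((replicate_sublist_replicate 2).2 (by omega))
    ?_ ?_ <;> simp only [sum_replicate, smul_eq_mul] <;> omega

lemma not_refinesKK_hook (k : ℕ) : ¬ RefinesKK ((k + 1) :: replicate (k - 1) 1) k := by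
  rintro ⟨l₁, l₂, hperm, h₁, h₂⟩
  rcases mem_append.1 (hperm.mem_iff.2 mem_cons_self) with h | h <;>
    · have := single_le_sum (fun _ _ => Nat.zero_le _) _ h
      omega

lemma not_refinesKK_replicate_two {k : ℕ} (hk : Odd k) : ¬ RefinesKK (replicate k 2) k := by
  rintro ⟨l₁, l₂, hperm, h₁, -⟩
  have htwo : l₁ = replicate l₁.length 2 :=
    eq_replicate_of_mem fun x hx => eq_of_mem_replicate (hperm.subset (mem_append_left _ hx))
  rw [htwo, sum_replicate, smul_eq_mul] at h₁
  obtain ⟨j, rfl⟩ := hk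
  omega

lemma eq_hook_of_mem_of_lt {k : ℕ} {y : List ℕ} (hy : IsPartition (2 * k) y)
    (hm : k ≤ y.length) {x : ℕ} (hx : x ∈ y) (hkx : k < x) :
    y = (k + 1) :: replicate (k - 1) 1 := by
  obtain ⟨hsort, hpos, hsum⟩ := hy
  obtain _ | ⟨y₀, yt⟩ := y
  · simp at hx
  have hxy₀ : x ≤ y₀ := (mem_cons.1 hx).elim Nat.le_of_eq (rel_of_pairwise_cons hsort)
  have hone : ∀ x ∈ yt, 1 ≤ x := fun x hx => hpos x (mem_cons_of_mem _ hx)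
  have hlen := length_le_sum_of_one_le yt hone
  simp only [sum_cons, length_cons] at hsum hm
  rw [eq_replicate_of_forall_le_of_sum_le hone (by omega), show y₀ = k + 1 by omega,
    show yt.length = k - 1 by omega]

lemma exists_sublist_sum_le_le_add {z : List ℕ} {k a : ℕ} (hz : z.Pairwise (· ≥ ·))
    (htwo : ∀ x ∈ z, 2 ≤ x) (hle : ∀ x ∈ z, x ≤ k) (ha : 0 < a) (hlen : k ≤ z.length + a)
    (hsum : z.sum + a = 2 * k) : ∃ p, p <+ z ∧ p.sum ≤ k ∧ k ≤ p.sum + a := by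
  obtain ⟨p, r, rfl, hp, hnext⟩ := exists_append_sum_le_lt z k
  refine ⟨p, sublist_append_left p r, hp, not_lt.1 fun hgap => ?_⟩
  obtain _ | ⟨w, r'⟩ := r
  · simp only [append_nil] at hsum
    omega
  have hw := hnext w r' rfl
  have hwk : w ≤ k := hle w (by simp)
  have hp3 : p.length * 3 ≤ p.sum := length_mul_le_sum fun x hx => by
    have := (pairwise_append.1 hz).2.2 x hx w mem_cons_self
    omega
  have hr2 : r'.length * 2 ≤ r'.sum := length_mul_le_sum fun x hx => htwo x (by simp [hx])
  simp only [sum_append, sum_cons, length_append, length_cons] at hsum hlen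
  omega

lemma refinesKK_or_eq_hook_or_eq_replicate_two {k : ℕ} {y : List ℕ}
    (hy : IsPartition (2 * k) y) (hm : k ≤ y.length) :
    RefinesKK y k ∨ y = (k + 1) :: replicate (k - 1) 1 ∨ (Odd k ∧ y = replicate k 2) := by
  by_cases hbig : ∃ x ∈ y, k < x
  · obtain ⟨x, hx, hkx⟩ := hbig
    exact Or.inr (Or.inl (eq_hook_of_mem_of_lt hy hm hx hkx))
  push Not at hbig
  obtain ⟨hsort, hpos, hsum⟩ := hy
  obtain ⟨z, a, rfl, htwo⟩ := exists_eq_append_replicate_one hsort hpos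
  have hsum' := hsum
  simp only [sum_append, sum_replicate, smul_eq_mul, mul_one] at hsum'
  simp only [length_append, length_replicate] at hm
  rcases Nat.eq_zero_or_pos a with rfl | ha
  · simp only [replicate_zero, append_nil] at hsum hm ⊢
    rw [eq_replicate_two_of_forall_two_le htwo hsum hm]
    rcases Nat.even_or_odd k with heven | hodd
    · exact Or.inl (refinesKK_replicate_two heven)
    · exact Or.inr (Or.inr ⟨hodd, rfl⟩)
  · obtain ⟨p, hpz, hp, hpa⟩ := exists_sublist_sum_le_le_add
      (hsort.sublist (sublist_append_left _ _)) htwo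
      (fun x hx => hbig x (mem_append_left _ hx)) ha (by omega) hsum'
    refine Or.inl (refinesKK_of_sublist
      (hpz.append ((replicate_sublist_replicate 1).2 (show k - p.sum ≤ a by omega)))
      (by simp only [sum_append, sum_replicate, smul_eq_mul, mul_one]; omega) hsum)

theorem stmt0_general (k : ℕ) (y : List ℕ)
    (hy : IsPartition (2 * k) y) (hm : k ≤ y.length) :
    ¬ RefinesKK y k ↔
      (y = (k + 1) :: List.replicate (k - 1) 1 ∨ (Odd k ∧ y = List.replicate k 2)) := by
  refine ⟨fun hnot => (refinesKK_or_eq_hook_or_eq_replicate_two hy hm).resolve_left hnot, ?_⟩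
  rintro (rfl | ⟨hodd, rfl⟩)
  · exact not_refinesKK_hook k
  · exact not_refinesKK_replicate_two hodd

theorem stmt0 (k : ℕ) (hk : 1 ≤ k) (y : List ℕ)
    (hy : IsPartition (2 * k) y) (hm : k ≤ y.length) :
    ¬ RefinesKK y k ↔
      (y = (k + 1) :: List.replicate (k - 1) 1 ∨ (Odd k ∧ y = List.replicate k 2)) :=
  stmt0_general k y hy hm
end

section
/- Let d ≥ 5 be odd and let (d_{2j})_{j=1}^{m_2} and (d_{3j})_{j=1}^{m_3} be partitions of d with m_2 + m_3 = d, and suppose neither partition is the single-part partition (d). Then either the multiset union of the two partitions contains at least two parts equal to 1, or (up to swapping the two partitions) (d_{2j}) = (3,2,...,2) and (d_{3j}) = (2,...,2,1). -/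
/-!
Writing the excess of a list of positive integers as `∑ (x - 2)` (so that parts `1` and `2`
contribute nothing), every part `x` satisfies `x + [x = 1] = 2 + (x - 2)`. Summing over both
partitions, with `2d` as total sum and `d` parts in all, the number of parts equal to `1` equals the
total excess. If there are fewer than two such parts, parity of `d` forces exactly one part `1` and
total excess `1`: one partition consists of `2`s and a single `1`, the other of `2`s and a single `3`.
-/

namespace List

theorem sum_add_count_one_eq {l : List ℕ} (hl : ∀ x ∈ l, 0 < x) :
    l.sum + l.count 1 = 2 * l.length + (l.map (· - 2)).sum := by
  induction l with
  | nil => simp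
  | cons a t ih =>
    have ha : 0 < a := hl a mem_cons_self
    have ht := ih fun x hx => hl x (mem_cons_of_mem _ hx)
    rw [sum_cons, count_cons, length_cons, map_cons, sum_cons]
    by_cases h1 : a = 1 <;> simp [h1] <;> omega

theorem le_two_add_sum_map_sub_two {l : List ℕ} {x : ℕ} (hx : x ∈ l) :
    x ≤ 2 + (l.map (· - 2)).sum := by
  have := le_sum_of_mem (mem_map_of_mem (f := (· - 2)) hx)
  omega

theorem eq_replicate_append_replicate_of_pairwise_ge {α : Type*} [LinearOrder α] {a b : α}
    (hba : b < a) {l : List α} (hl : l.Pairwise (· ≥ ·)) (hab : ∀ x ∈ l, x = a ∨ x = b) :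
    l = replicate (l.count a) a ++ replicate (l.count b) b := by
  refine Perm.eq_of_pairwise' hl ?_ (perm_iff_count.2 fun x => ?_)
  · refine pairwise_append.2 ⟨pairwise_replicate.2 (.inr le_rfl),
      pairwise_replicate.2 (.inr le_rfl), fun y hy z hz => ?_⟩
    rw [eq_of_mem_replicate hy, eq_of_mem_replicate hz]
    exact hba.le
  · rw [count_append, count_replicate, count_replicate]
    by_cases hxa : x = a
    · subst hxa; simp [hba.ne]
    by_cases hxb : x = b
    · subst hxb; simp [hba.ne']
    have : x ∉ l := fun hx => (hab x hx).elim hxa hxb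
    simp [count_eq_zero_of_not_mem this, Ne.symm hxa, Ne.symm hxb]

end List

open List

theorem IsPartition.eq_three_cons_replicate_two {d : ℕ} {l : List ℕ} (h : IsPartition d l)
    (hexcess : (l.map (· - 2)).sum = 1) (hone : l.count 1 = 0) :
    l = 3 :: replicate ((d - 3) / 2) 2 := by
  obtain ⟨hsorted, hpos, hsum⟩ := h
  have hmem : ∀ x ∈ l, x = 3 ∨ x = 2 := fun x hx => by
    have := le_two_add_sum_map_sub_two hx
    have : x ≠ 1 := fun h1 => (count_eq_zero.1 hone) (h1 ▸ hx)
    have := hpos x hx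
    omega
  have hl := eq_replicate_append_replicate_of_pairwise_ge (by norm_num) hsorted hmem
  rw [hl] at hexcess hsum
  simp only [map_append, map_replicate, sum_append, sum_replicate, smul_eq_mul] at hexcess hsum
  rw [hl, show l.count 3 = 1 by omega, show l.count 2 = (d - 3) / 2 by omega]
  rfl

theorem IsPartition.eq_replicate_two_append_one {d : ℕ} {l : List ℕ} (h : IsPartition d l)
    (hexcess : (l.map (· - 2)).sum = 0) (hone : l.count 1 = 1) :
    l = replicate ((d - 1) / 2) 2 ++ [1] := by
  obtain ⟨hsorted, hpos, hsum⟩ := h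
  have hmem : ∀ x ∈ l, x = 2 ∨ x = 1 := fun x hx => by
    have := le_two_add_sum_map_sub_two hx
    have := hpos x hx
    omega
  have hl := eq_replicate_append_replicate_of_pairwise_ge (by norm_num) hsorted hmem
  rw [hl] at hsum
  simp only [sum_append, sum_replicate, smul_eq_mul] at hsum
  rw [hl, hone, show l.count 2 = (d - 1) / 2 by omega]
  rfl

theorem stmt1_general (d : ℕ) (hodd : Odd d) (p2 p3 : List ℕ)
    (h2 : IsPartition d p2) (h3 : IsPartition d p3)
    (hlen : p2.length + p3.length = d) :
    2 ≤ (p2 ++ p3).count 1 ∨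
      (p2 = 3 :: List.replicate ((d - 3) / 2) 2 ∧
        p3 = List.replicate ((d - 1) / 2) 2 ++ [1]) ∨
      (p3 = 3 :: List.replicate ((d - 3) / 2) 2 ∧
        p2 = List.replicate ((d - 1) / 2) 2 ++ [1]) := by
  rw [count_append]
  rcases le_or_gt 2 (p2.count 1 + p3.count 1) with hc | hc
  · exact .inl hc
  right
  have e2 := sum_add_count_one_eq h2.2.1
  have e3 := sum_add_count_one_eq h3.2.1
  rw [h2.2.2] at e2
  rw [h3.2.2] at e3
  obtain ⟨m, rfl⟩ := hodd
  obtain ⟨hx2, hc2, hx3, hc3⟩ | ⟨hx3, hc3, hx2, hc2⟩ :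
      ((p2.map (· - 2)).sum = 1 ∧ p2.count 1 = 0 ∧ (p3.map (· - 2)).sum = 0 ∧ p3.count 1 = 1) ∨
      ((p3.map (· - 2)).sum = 1 ∧ p3.count 1 = 0 ∧ (p2.map (· - 2)).sum = 0 ∧ p2.count 1 = 1) := by
    omega
  · exact .inl ⟨h2.eq_three_cons_replicate_two hx2 hc2, h3.eq_replicate_two_append_one hx3 hc3⟩
  · exact .inr ⟨h3.eq_three_cons_replicate_two hx3 hc3, h2.eq_replicate_two_append_one hx2 hc2⟩

theorem stmt1 (d : ℕ) (hd : 5 ≤ d) (hodd : Odd d) (p2 p3 : List ℕ)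
    (h2 : IsPartition d p2) (h3 : IsPartition d p3)
    (hlen : p2.length + p3.length = d)
    (hn2 : p2 ≠ [d]) (hn3 : p3 ≠ [d]) :
    2 ≤ (p2 ++ p3).count 1 ∨
      (p2 = 3 :: List.replicate ((d - 3) / 2) 2 ∧
        p3 = List.replicate ((d - 1) / 2) 2 ++ [1]) ∨
      (p3 = 3 :: List.replicate ((d - 3) / 2) 2 ∧
        p2 = List.replicate ((d - 1) / 2) 2 ++ [1]) :=
  stmt1_general d hodd p2 p3 h2 h3 hlen
end

section
/- Let g ≥ 2 and d ≥ 2 and let (d_{2j})_{j=1}^{m_2}, (d_{3j})_{j=1}^{m_3} be partitions of d (non-increasing) with m_2 + m_3 = d - 2g. Then at least one of the following holds, up to swapping the two partitions: (1) d_{3,m_3} = 1; (2) all parts of both partitions are at least 2, and the last two parts of (d_{3j}) both equal 2; (3) the last part of (d_{2j}) and the last part of (d_{3j}) both equal 2; (4) there is an index j with d_{3j} ≥ 3 and d_{21} > d_{3j}; (5) all parts of both partitions are equal to one and the same integer k. -/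
/-- The five cases of the lemma, for the ordered pair of partitions `(a, b)`. -/
def FiveCases (a b : List ℕ) : Prop :=
  -- (1) the smallest part of `b` is 1
  b.getLastD 0 = 1 ∨
  -- (2) all parts of both partitions are ≥ 2, and the last two parts of `b` equal 2
  ((∀ x ∈ a, 2 ≤ x) ∧ (∀ x ∈ b, 2 ≤ x) ∧
    b.getLastD 0 = 2 ∧ b.dropLast.getLastD 0 = 2) ∨
  -- (3) the last parts of `a` and `b` both equal 2
  (a.getLastD 0 = 2 ∧ b.getLastD 0 = 2) ∨
  -- (4) some part of `b` is ≥ 3 and smaller than the largest part of `a`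
  (∃ x ∈ b, 3 ≤ x ∧ x < a.headD 0) ∨
  -- (5) all parts of both partitions are one and the same integer `k`
  (∃ k, (∀ x ∈ a, x = k) ∧ (∀ x ∈ b, x = k))

/-! If a smallest part is 1, or both smallest parts are 2, we are done; otherwise all parts are at
least 2 and, after swapping, those of `b` are at least 3. Unless (4) holds in either order, every
part of `a` is at most `min b`, and every part `x ≥ 3` of `a` is at least `k = max b`; so the parts
of `a` are 2 or `k`, and if `k` occurs in `a` then `b` is constant `k`. Since `d ≥ k ≥ 3`, a single
part 2 in `a` forces `k` to occur, whence `k ∣ d = 2 + k · #k`, which is absurd. Two parts 2 fill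
the last two places of `a` (case (2)); no part 2 means all parts equal `k` (case (5)). -/

namespace List

variable {α : Type*} {l : List α} {d : α}

theorem headD_mem_of_ne_nil (h : l ≠ []) : l.headD d ∈ l := by
  cases l with
  | nil => contradiction
  | cons a t => exact mem_cons_self

theorem getLastD_eq_getLast_of_ne_nil (h : l ≠ []) : l.getLastD d = l.getLast h := by
  simp [getLast?_eq_some_getLast h]

theorem getLastD_mem_of_ne_nil (h : l ≠ []) : l.getLastD d ∈ l :=
  getLastD_eq_getLast_of_ne_nil h ▸ getLast_mem h

theorem count_le_count_dropLast_add_one [BEq α] [LawfulBEq α] (a : α) :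
    l.count a ≤ l.dropLast.count a + 1 := by
  rcases eq_nil_or_concat' l with rfl | ⟨t, b, rfl⟩
  · simp
  · simp only [dropLast_concat, count_append, count_singleton]
    split <;> omega

section Antitone

variable [PartialOrder α] {x m : α} (hl : l.Pairwise (· ≥ ·))
include hl

theorem Pairwise.le_headD_of_ge (hx : x ∈ l) : x ≤ l.headD d := by
  have h := hl.rel_head hx
  cases l with
  | nil => contradiction
  | cons a t => exact h

theorem Pairwise.getLastD_le_of_ge (hx : x ∈ l) : l.getLastD d ≤ x :=
  getLastD_eq_getLast_of_ne_nil (ne_nil_of_mem hx) ▸ hl.rel_getLast hx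

theorem Pairwise.getLastD_eq_of_mem_of_ge (hm : m ∈ l) (hmin : ∀ x ∈ l, m ≤ x) :
    l.getLastD d = m :=
  (hl.getLastD_le_of_ge hm).antisymm (hmin _ (getLastD_mem_of_ne_nil (ne_nil_of_mem hm)))

theorem Pairwise.getLastD_dropLast_eq_of_two_le_count [DecidableEq α]
    (hmin : ∀ x ∈ l, m ≤ x) (hc : 2 ≤ l.count m) :
    l.getLastD d = m ∧ l.dropLast.getLastD d = m := by
  have hm : m ∈ l := count_pos_iff.1 (by omega)
  have hm' : m ∈ l.dropLast :=
    count_pos_iff.1 (by have := l.count_le_count_dropLast_add_one m; omega)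
  exact ⟨hl.getLastD_eq_of_mem_of_ge hm hmin,
    (hl.sublist (dropLast_sublist l)).getLastD_eq_of_mem_of_ge hm'
      fun x hx => hmin x (dropLast_subset l hx)⟩

end Antitone

theorem sum_eq_mul_count_add_mul_count {l : List ℕ} {m k : ℕ} (hmk : m ≠ k)
    (h : ∀ x ∈ l, x = m ∨ x = k) : l.sum = m * l.count m + k * l.count k := by
  induction l with
  | nil => simp
  | cons a t ih =>
    rw [forall_mem_cons] at h
    rcases h.1 with rfl | rfl <;> simp [hmk, hmk.symm, ih h.2] <;> ring

end List

namespace IsPartition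

variable {d : ℕ} {l : List ℕ}

theorem le_of_mem (h : IsPartition d l) {x : ℕ} (hx : x ∈ l) : x ≤ d :=
  h.2.2 ▸ List.le_sum_of_mem hx

theorem eq_nil_iff (h : IsPartition d l) : l = [] ↔ d = 0 := by
  refine ⟨fun hl => by simp [← h.2.2, hl], fun hd => List.eq_nil_iff_forall_not_mem.2 ?_⟩
  intro x hx
  have := h.le_of_mem hx
  have := h.2.1 x hx
  omega

end IsPartition

theorem fiveCases_of_two_le_count_two {a b : List ℕ} (ha : ∀ x ∈ a, 2 ≤ x)
    (hb : b.Pairwise (· ≥ ·)) (hb2 : ∀ x ∈ b, 2 ≤ x) (hc : 2 ≤ b.count 2) : FiveCases a b :=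
  Or.inr <| Or.inl ⟨ha, hb2, hb.getLastD_dropLast_eq_of_two_le_count hb2 hc⟩

theorem fiveCases_of_forall_mem_eq_two_or_eq {d k : ℕ} {a b : List ℕ} (ha : IsPartition d a)
    (hb : IsPartition d b) (ha2 : ∀ x ∈ a, 2 ≤ x) (hk3 : 3 ≤ k) (hka : k ∈ a)
    (hb_parts : ∀ x ∈ b, x = 2 ∨ x = k) (ha_const : k ∈ b → ∀ y ∈ a, y = k) :
    FiveCases a b := by
  have hsum : d = 2 * b.count 2 + k * b.count k :=
    hb.2.2 ▸ List.sum_eq_mul_count_add_mul_count (by omega) hb_parts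
  have hkd : k ≤ d := ha.le_of_mem hka
  have hkb (hc : b.count 2 ≤ 1) : k ∈ b := List.count_pos_iff.1 (by nlinarith)
  have hd (hc : b.count 2 ≤ 1) : d = a.length * k := by
    simpa using ha.2.2 ▸ List.sum_eq_card_nsmul a k (ha_const (hkb hc))
  obtain hc | hc | hc : b.count 2 = 0 ∨ b.count 2 = 1 ∨ 2 ≤ b.count 2 := by omega
  · refine Or.inr <| Or.inr <| Or.inr <| Or.inr ⟨k, ha_const (hkb (by omega)), fun x hx => ?_⟩
    exact (hb_parts x hx).resolve_left fun h2 => List.count_eq_zero.1 hc (h2 ▸ hx)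
  · have hk2 : k ∣ 2 := by
      have hdvd : k ∣ 2 + k * b.count k := ⟨a.length, by rw [hc] at hsum; linarith [hd hc.le]⟩
      exact (Nat.dvd_add_left (dvd_mul_right k _)).1 hdvd
    have := Nat.le_of_dvd two_pos hk2
    omega
  · exact fiveCases_of_two_le_count_two ha2 hb.1
      (fun x hx => by rcases hb_parts x hx with h | h <;> omega) hc

theorem fiveCases_of_three_le_getLastD {d : ℕ} {a b : List ℕ} (ha : IsPartition d a)
    (hb : IsPartition d b) (ha2 : 2 ≤ a.getLastD 0) (hb3 : 3 ≤ b.getLastD 0) :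
    FiveCases a b ∨ FiveCases b a := by
  have hb_ne : b ≠ [] := by rintro rfl; simp at hb3
  set k := b.headD 0
  have hk : k ∈ b := List.headD_mem_of_ne_nil hb_ne
  have hlast : b.getLastD 0 ∈ b := List.getLastD_mem_of_ne_nil hb_ne
  by_cases h4 : b.getLastD 0 < a.headD 0
  · exact Or.inl <| Or.inr <| Or.inr <| Or.inr <| Or.inl ⟨_, hlast, hb3, h4⟩
  by_cases h4' : ∃ x ∈ a, 3 ≤ x ∧ x < k
  · exact Or.inr <| Or.inr <| Or.inr <| Or.inr <| Or.inl h4'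
  push Not at h4 h4'
  have hk_le : b.getLastD 0 ≤ k := hb.1.getLastD_le_of_ge hk
  -- every part of `a` is at most `min b`, so a part other than 2 is pinned at `max b = k`
  refine Or.inr <| fiveCases_of_forall_mem_eq_two_or_eq hb ha
    (fun x hx => by have := hb.1.getLastD_le_of_ge (d := 0) hx; omega) (hb3.trans hk_le) hk
    (fun x hx => ?_) (fun hka y hy => ?_)
  · have := ha2.trans (ha.1.getLastD_le_of_ge hx)
    have := (ha.1.le_headD_of_ge (d := 0) hx).trans h4
    have := h4' x hx
    omega
  · have := (ha.1.le_headD_of_ge (d := 0) hka).trans h4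
    have := hb.1.getLastD_le_of_ge (d := 0) hy
    have := hb.1.le_headD_of_ge (d := 0) hy
    omega

theorem stmt4_general (d : ℕ) (p2 p3 : List ℕ)
    (h2 : IsPartition d p2) (h3 : IsPartition d p3) :
    FiveCases p2 p3 ∨ FiveCases p3 p2 := by
  rcases Nat.eq_zero_or_pos d with rfl | hd
  · rw [h2.eq_nil_iff.2 rfl, h3.eq_nil_iff.2 rfl]
    exact Or.inl <| Or.inr <| Or.inr <| Or.inr <| Or.inr ⟨0, by simp, by simp⟩
  have hpos (p : List ℕ) (hp : IsPartition d p) : 0 < p.getLastD 0 :=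
    hp.2.1 _ (List.getLastD_mem_of_ne_nil (mt hp.eq_nil_iff.1 hd.ne'))
  have := hpos p2 h2
  have := hpos p3 h3
  obtain h | h | h | h | h : p3.getLastD 0 = 1 ∨ p2.getLastD 0 = 1 ∨
      (p2.getLastD 0 = 2 ∧ p3.getLastD 0 = 2) ∨ (2 ≤ p2.getLastD 0 ∧ 3 ≤ p3.getLastD 0) ∨
      (3 ≤ p2.getLastD 0 ∧ 2 ≤ p3.getLastD 0) := by omega
  · exact Or.inl (Or.inl h)
  · exact Or.inr (Or.inl h)
  · exact Or.inl <| Or.inr <| Or.inr <| Or.inl h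
  · exact fiveCases_of_three_le_getLastD h2 h3 h.1 h.2
  · exact (fiveCases_of_three_le_getLastD h3 h2 h.2 h.1).symm

theorem stmt4 (g d : ℕ) (hg : 2 ≤ g) (hd : 2 ≤ d) (p2 p3 : List ℕ)
    (h2 : IsPartition d p2) (h3 : IsPartition d p3)
    (hlen : p2.length + p3.length = d - 2 * g) :
    FiveCases p2 p3 ∨ FiveCases p3 p2 :=
  stmt4_general d p2 p3 h2 h3
end

section
/- Let d ≥ 2 and suppose (d_{2j})_{j=1}^{m_2} and (d_{3j})_{j=1}^{m_3} are partitions of d with m_2 + m_3 = d, and suppose both partitions contain at least one odd part. Then at least one of the two partitions has smallest part equal to 1. -/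
/-! If neither smallest part is 1, every part of both partitions is at least 2, and an odd part is
at least 3; hence each partition of `d` has fewer than `d / 2` parts, so together they have fewer
than `d` parts. -/

namespace List

lemma getLastD_eq_getLast {α : Type*} {l : List α} (hl : l ≠ []) (d : α) :
    l.getLastD d = l.getLast hl := by
  simp [getLastD_eq_getLast?, getLast?_eq_some_getLast hl]

lemma Pairwise.getLast_le {α : Type*} [Preorder α] {l : List α} {x : α}
    (h : l.Pairwise (· ≥ ·)) (hx : x ∈ l) : l.getLast (ne_nil_of_mem hx) ≤ x :=
  h.rel_getLast_of_rel_getLast_getLast hx le_rfl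

lemma two_mul_length_lt_sum {l : List ℕ} (h2 : ∀ x ∈ l, 2 ≤ x) (h3 : ∃ x ∈ l, 2 < x) :
    2 * l.length < l.sum := by
  simpa [mul_comm] using sum_lt_sum (fun _ => 2) id h2 h3

end List

lemma IsPartition.two_mul_length_lt {d : ℕ} {l : List ℕ} (h : IsPartition d l)
    (hlast : l.getLastD 0 ≠ 1) (hodd : ∃ x ∈ l, Odd x) : 2 * l.length < d := by
  obtain ⟨hsorted, hpos, rfl⟩ := h
  obtain ⟨x, hx, hxodd⟩ := hodd
  have hne : l ≠ [] := List.ne_nil_of_mem hx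
  rw [List.getLastD_eq_getLast hne] at hlast
  have hlast_pos := hpos _ (List.getLast_mem hne)
  have hge2 : ∀ y ∈ l, 2 ≤ y := fun y hy => by
    have := hsorted.getLast_le hy
    omega
  refine List.two_mul_length_lt_sum hge2 ⟨x, hx, ?_⟩
  have := hge2 x hx
  rcases hxodd with ⟨k, rfl⟩
  omega

theorem stmt14_general (d : ℕ) (p2 p3 : List ℕ)
    (h2 : IsPartition d p2) (h3 : IsPartition d p3)
    (hlen : p2.length + p3.length = d)
    (ho2 : ∃ x ∈ p2, Odd x) (ho3 : ∃ x ∈ p3, Odd x) :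
    p2.getLastD 0 = 1 ∨ p3.getLastD 0 = 1 := by
  by_contra! h
  have := h2.two_mul_length_lt h.1 ho2
  have := h3.two_mul_length_lt h.2 ho3
  omega

theorem stmt14 (d : ℕ) (hd : 2 ≤ d) (p2 p3 : List ℕ)
    (h2 : IsPartition d p2) (h3 : IsPartition d p3)
    (hlen : p2.length + p3.length = d)
    (ho2 : ∃ x ∈ p2, Odd x) (ho3 : ∃ x ∈ p3, Odd x) :
    p2.getLastD 0 = 1 ∨ p3.getLastD 0 = 1 :=
  stmt14_general d p2 p3 h2 h3 hlen ho2 ho3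
end

section
/- Let d = 2k ≥ 4 and let (d_{2j})_{j=1}^{m_2}, (d_{3j})_{j=1}^{m_3} be partitions of 2k with m_2 + m_3 = 2k, each containing at least one odd part. Then, up to swapping the two partitions, d_{21} ≥ 3 and d_{3,m_3} = 1. -/
namespace List

theorem le_headD_of_mem {α : Type*} [Preorder α] {l : List α} (hl : l.Pairwise (· ≥ ·))
    {x : α} (hx : x ∈ l) (d : α) : x ≤ l.headD d := by
  rw [headD_eq_head?_getD, head?_eq_some_head (ne_nil_of_mem hx), Option.getD_some]
  exact hl.rel_head hx

theorem getLastD_le_of_mem {α : Type*} [Preorder α] {l : List α} (hl : l.Pairwise (· ≥ ·))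
    {x : α} (hx : x ∈ l) (d : α) : l.getLastD d ≤ x := by
  rw [getLastD_eq_getLast?, getLast?_eq_some_getLast (ne_nil_of_mem hx), Option.getD_some]
  exact hl.rel_getLast hx

variable {M : Type*} [AddCommMonoid M] [PartialOrder M] [IsOrderedCancelAddMonoid M]

theorem length_nsmul_lt_sum {l : List M} {a : M} (h : ∀ x ∈ l, a ≤ x)
    (hlt : ∃ x ∈ l, a < x) : l.length • a < l.sum := by
  simpa only [map_const', sum_replicate, map_id] using sum_lt_sum (fun _ => a) id h hlt

theorem sum_lt_length_nsmul {l : List M} {a : M} (h : ∀ x ∈ l, x ≤ a)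
    (hlt : ∃ x ∈ l, x < a) : l.sum < l.length • a :=
  length_nsmul_lt_sum (M := Mᵒᵈ) h hlt

theorem one_mem_or_exists_three_le {l : List ℕ} (ho : ∃ x ∈ l, Odd x) :
    1 ∈ l ∨ ∃ x ∈ l, 3 ≤ x := by
  obtain ⟨x, hx, c, rfl⟩ := ho
  rcases c with _ | c
  · exact .inl hx
  · exact .inr ⟨_, hx, by omega⟩

theorem exists_three_le_or_sum_lt_two_mul_length {l : List ℕ} (ho : ∃ x ∈ l, Odd x) :
    (∃ x ∈ l, 3 ≤ x) ∨ l.sum < 2 * l.length := by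
  refine or_iff_not_imp_left.2 fun hsmall => ?_
  have hle : ∀ x ∈ l, x ≤ 2 := fun x hx => by
    by_contra! h
    exact hsmall ⟨x, hx, h⟩
  obtain ⟨x, hx, c, rfl⟩ := ho
  have := sum_lt_length_nsmul hle ⟨_, hx, by have := hle _ hx; omega⟩
  rwa [smul_eq_mul, mul_comm] at this

theorem one_mem_or_two_mul_length_lt_sum {l : List ℕ} (hpos : ∀ x ∈ l, 0 < x)
    (ho : ∃ x ∈ l, Odd x) : 1 ∈ l ∨ 2 * l.length < l.sum := by
  refine or_iff_not_imp_left.2 fun h1 => ?_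
  have hge : ∀ x ∈ l, 2 ≤ x := fun x hx => by
    have := hpos x hx
    have : x ≠ 1 := ne_of_mem_of_not_mem hx h1
    omega
  obtain ⟨x, hx, c, rfl⟩ := ho
  have := length_nsmul_lt_sum hge ⟨_, hx, by have := hge _ hx; omega⟩
  rwa [smul_eq_mul, mul_comm] at this

end List

theorem IsPartition.getLastD_eq_one {n : ℕ} {l : List ℕ} (h : IsPartition n l) (h1 : 1 ∈ l) :
    l.getLastD 0 = 1 := by
  have hmem : l.getLastD 0 ∈ l := by
    rw [List.getLastD_eq_getLast?, List.getLast?_eq_some_getLast (List.ne_nil_of_mem h1)]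
    exact List.getLast_mem _
  have := h.2.1 _ hmem
  have := List.getLastD_le_of_mem h.1 h1 0
  omega

theorem stmt15_general (k : ℕ) (p2 p3 : List ℕ)
    (h2 : IsPartition (2 * k) p2) (h3 : IsPartition (2 * k) p3)
    (hlen : p2.length + p3.length = 2 * k)
    (ho2 : ∃ x ∈ p2, Odd x) (ho3 : ∃ x ∈ p3, Odd x) :
    (3 ≤ p2.headD 0 ∧ p3.getLastD 0 = 1) ∨
    (3 ≤ p3.headD 0 ∧ p2.getLastD 0 = 1) := by
  have hbig : (∃ x ∈ p2, 3 ≤ x) ∨ (∃ x ∈ p3, 3 ≤ x) := by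
    refine (List.exists_three_le_or_sum_lt_two_mul_length ho2).imp_right fun hs2 => ?_
    refine (List.exists_three_le_or_sum_lt_two_mul_length ho3).resolve_right fun hs3 => ?_
    have := h2.2.2
    have := h3.2.2
    omega
  have hone : 1 ∈ p2 ∨ 1 ∈ p3 := by
    refine (List.one_mem_or_two_mul_length_lt_sum h2.2.1 ho2).imp_right fun hs2 => ?_
    refine (List.one_mem_or_two_mul_length_lt_sum h3.2.1 ho3).resolve_right fun hs3 => ?_
    have := h2.2.2
    have := h3.2.2
    omega
  have hodd2 := List.one_mem_or_exists_three_le ho2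
  have hodd3 := List.one_mem_or_exists_three_le ho3
  obtain ⟨⟨x, hx, hx3⟩, h1⟩ | ⟨⟨x, hx, hx3⟩, h1⟩ :
      ((∃ x ∈ p2, 3 ≤ x) ∧ 1 ∈ p3) ∨ ((∃ x ∈ p3, 3 ≤ x) ∧ 1 ∈ p2) := by
    generalize (∃ x ∈ p2, 3 ≤ x) = big2 at *
    generalize (∃ x ∈ p3, 3 ≤ x) = big3 at *
    tauto
  · exact .inl ⟨hx3.trans (List.le_headD_of_mem h2.1 hx 0), h3.getLastD_eq_one h1⟩
  · exact .inr ⟨hx3.trans (List.le_headD_of_mem h3.1 hx 0), h2.getLastD_eq_one h1⟩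

theorem stmt15 (k : ℕ) (hk : 2 ≤ k) (p2 p3 : List ℕ)
    (h2 : IsPartition (2 * k) p2) (h3 : IsPartition (2 * k) p3)
    (hlen : p2.length + p3.length = 2 * k)
    (ho2 : ∃ x ∈ p2, Odd x) (ho3 : ∃ x ∈ p3, Odd x) :
    (3 ≤ p2.headD 0 ∧ p3.getLastD 0 = 1) ∨
    (3 ≤ p3.headD 0 ∧ p2.getLastD 0 = 1) :=
  stmt15_general k p2 p3 h2 h3 hlen ho2 ho3
end

section
/- A minimal checkerboard graph on a closed surface has complement consisting of exactly one black disc and one white disc. -/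
/-! Along an edge the two endpoints share a black disc, and each vertex sees only one black
disc, so the black disc seen from a vertex is constant along edges, hence, by connectivity,
the same at every vertex. Every disc touches some vertex, so it is the only black disc.
The same argument applies to the white discs. -/

section IncidentFaceOfColor

variable {V F : Type*} {adj : V → V → Prop} {inc : V → F → Prop} {P : F → Prop}

theorem eq_of_reflTransGen_of_existsUnique_incident
    (hmin : ∀ v, ∃! f, P f ∧ inc v f)
    (hadj : ∀ v w, adj v w → ∃ f, P f ∧ inc v f ∧ inc w f)
    {v w : V} (hvw : Relation.ReflTransGen adj v w) {f g : F}
    (hf : P f ∧ inc v f) (hg : P g ∧ inc w g) : f = g := by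
  induction hvw generalizing g with
  | refl => exact (hmin v).unique hf hg
  | tail _ hxw ih =>
    obtain ⟨h, hPh, hxh, hwh⟩ := hadj _ _ hxw
    exact (ih ⟨hPh, hxh⟩).trans ((hmin _).unique ⟨hPh, hwh⟩ hg)

theorem existsUnique_of_existsUnique_incident [Nonempty V]
    (hconn : ∀ v w, Relation.ReflTransGen adj v w)
    (hface : ∀ f, P f → ∃ v, inc v f)
    (hmin : ∀ v, ∃! f, P f ∧ inc v f)
    (hadj : ∀ v w, adj v w → ∃ f, P f ∧ inc v f ∧ inc w f) :
    ∃! f, P f := by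
  obtain ⟨v₀⟩ := ‹Nonempty V›
  obtain ⟨f₀, hf₀, -⟩ := hmin v₀
  refine ⟨f₀, hf₀.1, fun f hf => ?_⟩
  obtain ⟨v, hv⟩ := hface f hf
  exact eq_of_reflTransGen_of_existsUnique_incident hmin hadj (hconn v v₀) ⟨hf, hv⟩ hf₀

end IncidentFaceOfColor

theorem stmt19_general (V F : Type) [Nonempty V]
    (adj : V → V → Prop)
    (hconn : ∀ v w : V, Relation.ReflTransGen adj v w)
    (color : F → Bool)
    (inc : V → F → Prop)
    (hface : ∀ f : F, ∃ v, inc v f)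
    (hmin_black : ∀ v : V, ∃! f, color f = true ∧ inc v f)
    (hmin_white : ∀ v : V, ∃! f, color f = false ∧ inc v f)
    (hadj_black : ∀ v w, adj v w → ∃ f, color f = true ∧ inc v f ∧ inc w f)
    (hadj_white : ∀ v w, adj v w → ∃ f, color f = false ∧ inc v f ∧ inc w f) :
    (∃! f, color f = true) ∧ (∃! f, color f = false) :=
  ⟨existsUnique_of_existsUnique_incident hconn (fun f _ => hface f) hmin_black hadj_black,
    existsUnique_of_existsUnique_incident hconn (fun f _ => hface f) hmin_white hadj_white⟩

theorem stmt19 (V F : Type) [Nonempty V]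
    (adj : V → V → Prop)
    (hsym : ∀ v w, adj v w → adj w v)
    (hconn : ∀ v w : V, Relation.ReflTransGen adj v w)
    (color : F → Bool)
    (inc : V → F → Prop)
    (hface : ∀ f : F, ∃ v, inc v f)
    (hmin_black : ∀ v : V, ∃! f, color f = true ∧ inc v f)
    (hmin_white : ∀ v : V, ∃! f, color f = false ∧ inc v f)
    (hadj_black : ∀ v w, adj v w → ∃ f, color f = true ∧ inc v f ∧ inc w f)
    (hadj_white : ∀ v w, adj v w → ∃ f, color f = false ∧ inc v f ∧ inc w f) :
    (∃! f, color f = true) ∧ (∃! f, color f = false) :=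
  stmt19_general V F adj hconn color inc hface hmin_black hmin_white hadj_black hadj_white
end
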